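/- arXiv:2102.09822 — 6 statements merged into one kernel-verified Lean document; each statement's English description precedes it below -/
import Mathlib

section
/- Let Q₁,…,Q_N satisfy ∑ᵢ QᵢᵀQᵢ = I and π > 0. Then T_π := (1/N) ∑ᵢ (QᵢᵀQᵢ + πI)^{-1} is symmetric, and every eigenvalue τ of T_π satisfies τ ≥ N/(1 + πN). -/
/-!
Write `Aᵢ = QᵢᵀQᵢ + πI`. Each `Aᵢ` is positive definite, so `T_π` is symmetric, and
`∑ Aᵢ = (1 + πN) I`. Cauchy–Schwarz for the inner product `⟨u, v⟩ = uᵀ Aᵢ v`, applied to `t` and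
`Aᵢ⁻¹ t`, gives `|t|⁴ ≤ (tᵀAᵢt)(tᵀAᵢ⁻¹t)`, and the Cauchy–Schwarz inequality for sums turns these
into `N² |t|⁴ ≤ (tᵀ(∑ Aᵢ)t)(tᵀ(∑ Aᵢ⁻¹)t) = (1 + πN) |t|² · N τ |t|²` for an eigenvector `t`.
-/

open Matrix BigOperators

variable {ι : Type*} [Fintype ι] [DecidableEq ι]

theorem Matrix.PosDef.sq_dotProduct_self_le_mul {A : Matrix ι ι ℝ} (hA : A.PosDef) (t : ι → ℝ) :
    (t ⬝ᵥ t) ^ 2 ≤ (t ⬝ᵥ A *ᵥ t) * (t ⬝ᵥ A⁻¹ *ᵥ t) := by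
  have hAt : Aᵀ = A := by simpa using hA.isHermitian.eq
  have hAinv : A *ᵥ (A⁻¹ *ᵥ t) = t := by
    rw [mulVec_mulVec, mul_nonsing_inv A hA.det_pos.ne'.isUnit, one_mulVec]
  have hcross : (A⁻¹ *ᵥ t) ⬝ᵥ A *ᵥ t = t ⬝ᵥ t := by
    rw [dotProduct_mulVec, ← mulVec_transpose, hAt, hAinv]
  -- `c ↦ (A⁻¹t - c t)ᵀ A (A⁻¹t - c t)` is a nonnegative quadratic, so its discriminant is `≤ 0`.
  have hquad : ∀ c : ℝ,
      0 ≤ (t ⬝ᵥ A *ᵥ t) * (c * c) + (-2 * (t ⬝ᵥ t)) * c + t ⬝ᵥ A⁻¹ *ᵥ t := by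
    intro c
    have := hA.posSemidef.dotProduct_mulVec_nonneg (A⁻¹ *ᵥ t - c • t)
    simp only [star_trivial, mulVec_sub, mulVec_smul, hAinv, sub_dotProduct, dotProduct_sub,
      smul_dotProduct, dotProduct_smul, hcross, smul_eq_mul] at this
    rw [dotProduct_comm (A⁻¹ *ᵥ t) t] at this
    linarith
  have := discrim_le_zero hquad
  rw [discrim] at this
  linarith

theorem Matrix.sq_card_mul_dotProduct_self_le_mul {κ : Type*} [Fintype κ]
    {A : κ → Matrix ι ι ℝ} (hA : ∀ k, (A k).PosDef) (t : ι → ℝ) :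
    (Fintype.card κ * (t ⬝ᵥ t)) ^ 2 ≤
      (t ⬝ᵥ (∑ k, A k) *ᵥ t) * (t ⬝ᵥ (∑ k, (A k)⁻¹) *ᵥ t) := by
  simp only [sum_mulVec, dotProduct_sum]
  rw [← nsmul_eq_mul, ← Finset.card_univ, ← Finset.sum_const]
  refine Finset.sum_sq_le_sum_mul_sum_of_sq_le_mul _ (fun k _ => ?_) (fun k _ => ?_)
    (fun k _ => (hA k).sq_dotProduct_self_le_mul t)
  · simpa using (hA k).posSemidef.dotProduct_mulVec_nonneg t
  · simpa using (hA k).inv.posSemidef.dotProduct_mulVec_nonneg t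

theorem Matrix.posDef_transpose_mul_self_add_smul_one {m : Type*} [Fintype m]
    (Q : Matrix m ι ℝ) {p : ℝ} (hp : 0 < p) : (Qᵀ * Q + p • (1 : Matrix ι ι ℝ)).PosDef := by
  have hQQ : (Qᵀ * Q).PosSemidef := by simpa using posSemidef_conjTranspose_mul_self Q
  exact PosDef.posSemidef_add hQQ (PosDef.one.smul hp)

theorem stmt4 {N n : ℕ} (hN : 2 ≤ N) {m : Fin N → ℕ}
    (Q : ∀ i, Matrix (Fin (m i)) (Fin n) ℝ)
    (hQ : ∑ i, (Q i)ᵀ * Q i = 1)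
    (p : ℝ) (hp : 0 < p)
    (T : Matrix (Fin n) (Fin n) ℝ)
    (hT : T = (N : ℝ)⁻¹ •
      ∑ i, ((Q i)ᵀ * Q i + p • (1 : Matrix (Fin n) (Fin n) ℝ))⁻¹) :
    T.IsHermitian ∧
      ∀ (τ : ℝ) (t : Fin n → ℝ), t ≠ 0 → T *ᵥ t = τ • t →
        (N : ℝ) / (1 + p * N) ≤ τ := by
  set A : Fin N → Matrix (Fin n) (Fin n) ℝ := fun i => (Q i)ᵀ * Q i + p • 1
  have hA : ∀ i, (A i).PosDef := fun i => posDef_transpose_mul_self_add_smul_one (Q i) hp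
  have hsumA : ∑ i, A i = (1 + p * N) • (1 : Matrix (Fin n) (Fin n) ℝ) := by
    simp only [A, Finset.sum_add_distrib, hQ, Finset.sum_const, Finset.card_univ,
      Fintype.card_fin, ← Nat.cast_smul_eq_nsmul ℝ, smul_smul, add_smul, one_smul, mul_comm]
  have hNpos : (0 : ℝ) < N := Nat.cast_pos.mpr (by omega)
  have hsumAinv : ∑ i, (A i)⁻¹ = (N : ℝ) • T := by rw [hT, smul_inv_smul₀ hNpos.ne']
  refine ⟨hT ▸ IsHermitian.smul (isSelfAdjoint_sum _ fun i _ => (hA i).inv.isHermitian)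
    (IsSelfAdjoint.all _), fun τ t ht hτ => ?_⟩
  have hs : 0 < t ⬝ᵥ t := by simpa using dotProduct_star_self_pos_iff.mpr ht
  have key := sq_card_mul_dotProduct_self_le_mul hA t
  rw [hsumA, hsumAinv, smul_mulVec, smul_mulVec, one_mulVec, hτ] at key
  simp only [dotProduct_smul, smul_eq_mul, Fintype.card_fin] at key
  rw [div_le_iff₀ (by positivity)]
  nlinarith [mul_pos hNpos (mul_pos hs hs)]
end

section
/- Let Q₁,…,Q_N satisfy ∑ᵢ QᵢᵀQᵢ = I and π > 0. Then every eigenvalue τ of T_π := (1/N) ∑ᵢ (QᵢᵀQᵢ + πI)^{-1} satisfies τ ≤ (πN + N − 1)/(πN(1+π)). -/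
/-!
On `[0, 1]` the convex function `x ↦ (x + p)⁻¹` lies below its chord `p⁻¹ + ((1 + p)⁻¹ - p⁻¹) x`.
For `0 ≤ A ≤ 1` the matrix version holds because the gap is `(p (1 + p))⁻¹ A (1 - A) (A + p)⁻¹`,
a product of commuting positive semidefinite matrices. Applied to `Aᵢ = QᵢᵀQᵢ` and summed with
`∑ Aᵢ = 1`, the chord bounds give `T ≤ (p N + N - 1) / (p N (1 + p)) • 1` in the Loewner order,
which bounds every eigenvalue of `T`.
-/

open Matrix
open scoped MatrixOrder ComplexOrder

theorem Matrix.commute_nonsing_inv_right {ι R : Type*} [Fintype ι] [DecidableEq ι] [CommRing R]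
    {A M : Matrix ι ι R} (hM : IsUnit M) (h : Commute A M) : Commute A M⁻¹ := by
  obtain ⟨u, rfl⟩ := hM
  rw [← coe_units_inv]
  exact h.units_inv_right

section

variable {ι 𝕜 : Type*} [Fintype ι] [DecidableEq ι] [RCLike 𝕜]

theorem Matrix.inv_add_smul_one_le {A : Matrix ι ι 𝕜} (hA₀ : 0 ≤ A) (hA₁ : A ≤ 1)
    {p : ℝ} (hp : 0 < p) :
    (A + p • 1)⁻¹ ≤ p⁻¹ • (1 : Matrix ι ι 𝕜) + ((1 + p)⁻¹ - p⁻¹) • A := by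
  set M := A + p • (1 : Matrix ι ι 𝕜)
  have hM : M.PosDef := PosDef.posSemidef_add hA₀.posSemidef (PosDef.one.smul hp)
  have hAM : Commute A M⁻¹ := commute_nonsing_inv_right hM.isUnit
    ((Commute.refl A).add_right ((Commute.one_right A).smul_right p))
  have hD : 0 ≤ A * (1 - A) * M⁻¹ :=
    Commute.mul_nonneg
      (Commute.mul_nonneg hA₀ (sub_nonneg.2 hA₁) ((Commute.one_right A).sub_right (.refl A)))
      hM.inv.posSemidef.nonneg (hAM.mul_left ((Commute.one_left _).sub_left hAM))
  have hmul : (p⁻¹ • (1 : Matrix ι ι 𝕜) + ((1 + p)⁻¹ - p⁻¹) • A) * M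
      = 1 + (p * (1 + p))⁻¹ • (A * (1 - A)) := by
    simp only [M, mul_add, add_mul, mul_sub, smul_mul_assoc, mul_smul_comm, mul_one, one_mul]
    match_scalars <;> field_simp <;> ring
  have hdiff : p⁻¹ • (1 : Matrix ι ι 𝕜) + ((1 + p)⁻¹ - p⁻¹) • A - M⁻¹
      = (p * (1 + p))⁻¹ • (A * (1 - A) * M⁻¹) := by
    rw [← smul_mul_assoc, ← add_sub_cancel_left 1 ((p * (1 + p))⁻¹ • (A * (1 - A))), ← hmul,
      sub_mul, mul_assoc, mul_nonsing_inv _ ((isUnit_iff_isUnit_det _).1 hM.isUnit), mul_one,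
      one_mul]
  rw [← sub_nonneg, hdiff]
  exact smul_nonneg (by positivity) hD

theorem Matrix.sum_inv_add_smul_one_le {κ : Type*} [Fintype κ] {A : κ → Matrix ι ι 𝕜}
    (hA₀ : ∀ k, 0 ≤ A k) (hA : ∑ k, A k = 1) {p : ℝ} (hp : 0 < p) :
    ∑ k, (A k + p • 1)⁻¹ ≤ (Fintype.card κ * p⁻¹ + ((1 + p)⁻¹ - p⁻¹)) • (1 : Matrix ι ι 𝕜) := by
  have hA₁ (k : κ) : A k ≤ 1 := hA ▸ Finset.single_le_sum (fun j _ => hA₀ j) (Finset.mem_univ k)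
  calc ∑ k, (A k + p • 1)⁻¹ ≤ ∑ k, (p⁻¹ • (1 : Matrix ι ι 𝕜) + ((1 + p)⁻¹ - p⁻¹) • A k) :=
        Finset.sum_le_sum fun k _ => inv_add_smul_one_le (hA₀ k) (hA₁ k) hp
    _ = _ := by
      rw [Finset.sum_add_distrib, ← Finset.smul_sum, ← Finset.smul_sum, hA, Finset.sum_const,
        Finset.card_univ]
      module

theorem Matrix.le_of_mulVec_eq_smul_of_le_smul_one {T : Matrix ι ι 𝕜} {c τ : ℝ}
    (hT : T ≤ c • 1) {t : ι → 𝕜} (ht : t ≠ 0) (hτ : T *ᵥ t = τ • t) : τ ≤ c := by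
  have h := (le_iff.1 hT).dotProduct_mulVec_nonneg t
  rw [sub_mulVec, hτ, smul_mulVec, one_mulVec, dotProduct_sub, dotProduct_smul, dotProduct_smul,
    ← sub_smul, RCLike.nonneg_iff, RCLike.smul_re] at h
  have htt : 0 < star t ⬝ᵥ t := dotProduct_star_self_pos_iff.2 ht
  exact sub_nonneg.1 (nonneg_of_mul_nonneg_left h.1 (RCLike.pos_iff.1 htt).1)

end

theorem stmt5_general {N n : ℕ} {m : Fin N → ℕ}
    (Q : ∀ i, Matrix (Fin (m i)) (Fin n) ℝ)
    (hQ : ∑ i, (Q i)ᵀ * Q i = 1)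
    (p : ℝ) (hp : 0 < p)
    (T : Matrix (Fin n) (Fin n) ℝ)
    (hT : T = (N : ℝ)⁻¹ •
      ∑ i, ((Q i)ᵀ * Q i + p • (1 : Matrix (Fin n) (Fin n) ℝ))⁻¹) :
    ∀ (τ : ℝ) (t : Fin n → ℝ), t ≠ 0 → T *ᵥ t = τ • t →
      τ ≤ (p * N + N - 1) / (p * N * (1 + p)) := by
  intro τ t ht hτ
  have hA₀ (i : Fin N) : 0 ≤ (Q i)ᵀ * Q i := (posSemidef_conjTranspose_mul_self (Q i)).nonneg
  have hsum := sum_inv_add_smul_one_le hA₀ hQ hp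
  rw [Fintype.card_fin] at hsum
  -- for `N = 0` both sides vanish by the conventions `0⁻¹ = 0` and `x / 0 = 0`
  have hconst :
      (N : ℝ)⁻¹ * (N * p⁻¹ + ((1 + p)⁻¹ - p⁻¹)) = (p * N + N - 1) / (p * N * (1 + p)) := by
    rcases eq_or_ne (N : ℝ) 0 with hN | hN
    · simp [hN]
    · field_simp
      ring
  refine le_of_mulVec_eq_smul_of_le_smul_one ?_ ht hτ
  rw [hT, ← hconst, ← smul_smul]
  exact smul_le_smul_of_nonneg_left hsum (by positivity)

theorem stmt5 {N n : ℕ} (hN : 2 ≤ N) {m : Fin N → ℕ}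
    (Q : ∀ i, Matrix (Fin (m i)) (Fin n) ℝ)
    (hQ : ∑ i, (Q i)ᵀ * Q i = 1)
    (p : ℝ) (hp : 0 < p)
    (T : Matrix (Fin n) (Fin n) ℝ)
    (hT : T = (N : ℝ)⁻¹ •
      ∑ i, ((Q i)ᵀ * Q i + p • (1 : Matrix (Fin n) (Fin n) ℝ))⁻¹) :
    ∀ (τ : ℝ) (t : Fin n → ℝ), t ≠ 0 → T *ᵥ t = τ • t →
      τ ≤ (p * N + N - 1) / (p * N * (1 + p)) :=
  stmt5_general Q hQ p hp T hT
end

section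
/- Let Q₁,…,Q_N satisfy ∑ᵢ QᵢᵀQᵢ = I and π > 0. Suppose t is a unit vector with Q_j t = 0 for all j ≠ i₀ (for some fixed index i₀). Then Q_{i₀}ᵀQ_{i₀} t = t, and T_π t = ((πN + N − 1)/(πN(1+π)))·t; i.e., t is an eigenvector of T_π attaining the maximal eigenvalue bound. -/
/-!
Since `t` lies in the kernel of every `Q j` with `j ≠ i₀`, the decomposition `∑ (Q i)ᵀ Q i = 1`
applied to `t` leaves only `(Q i₀)ᵀ Q i₀ t = t`. Hence `t` is an eigenvector of every
`(Q i)ᵀ Q i + p • 1`, with eigenvalue `1 + p` for `i = i₀` and `p` otherwise, so also of the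
inverses, and `T t` is `t` scaled by the average `((1 + p)⁻¹ + (N - 1) p⁻¹) / N`.
-/

open Matrix BigOperators
open scoped ComplexOrder

theorem Fintype.sum_ite_eq_const {ι R : Type*} [Fintype ι] [DecidableEq ι] [CommRing R]
    (i₀ : ι) (a b : R) :
    ∑ i, (if i = i₀ then a else b) = a + (Fintype.card ι - 1 : R) * b := by
  have hsplit : ∀ i, (if i = i₀ then a else b) = b + if i = i₀ then a - b else 0 := fun i => by
    split_ifs <;> abel
  simp only [hsplit, Finset.sum_add_distrib, Finset.sum_const, Finset.sum_ite_eq', Finset.mem_univ,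
    if_true, Finset.card_univ, nsmul_eq_mul]
  ring

theorem Matrix.posDef_conjTranspose_mul_self_add_smul_one {m n 𝕜 : Type*} [Fintype m] [Fintype n]
    [DecidableEq n] [RCLike 𝕜] (A : Matrix m n 𝕜) {p : 𝕜} (hp : 0 < p) :
    (Aᴴ * A + p • (1 : Matrix n n 𝕜)).PosDef :=
  PosDef.posSemidef_add (posSemidef_conjTranspose_mul_self A) (PosDef.one.smul hp)

theorem Matrix.mulVec_eq_self_of_sum_eq_one {ι n R : Type*} [Fintype ι] [Fintype n] [DecidableEq n]
    [Semiring R] {A : ι → Matrix n n R} (hA : ∑ i, A i = 1) {t : n → R} {i₀ : ι}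
    (ht : ∀ j, j ≠ i₀ → A j *ᵥ t = 0) : A i₀ *ᵥ t = t := by
  have := congrArg (· *ᵥ t) hA
  simp only [one_mulVec, sum_mulVec] at this
  rwa [Finset.sum_eq_single_of_mem i₀ (Finset.mem_univ _) fun j _ hj => ht j hj] at this

theorem Matrix.inv_add_smul_one_mulVec_of_mulVec_eq_smul {n K : Type*} [Fintype n] [DecidableEq n]
    [Field K] {A : Matrix n n K} {p c : K} (hA : IsUnit (A + p • 1)) (hc : c + p ≠ 0) {t : n → K}
    (ht : A *ᵥ t = c • t) : (A + p • 1)⁻¹ *ᵥ t = (c + p)⁻¹ • t := by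
  have := hA.invertible
  refine inv_mulVec_eq_vec ?_
  rw [mulVec_smul, add_mulVec, ht, smul_mulVec, one_mulVec, ← add_smul, smul_smul,
    inv_mul_cancel₀ hc, one_smul]

theorem stmt9_general {N n : ℕ} {m : Fin N → ℕ}
    (Q : ∀ i, Matrix (Fin (m i)) (Fin n) ℝ)
    (hQ : ∑ i, (Q i)ᵀ * Q i = 1)
    (p : ℝ) (hp : 0 < p)
    (T : Matrix (Fin n) (Fin n) ℝ)
    (hT : T = (N : ℝ)⁻¹ •
      ∑ i, ((Q i)ᵀ * Q i + p • (1 : Matrix (Fin n) (Fin n) ℝ))⁻¹)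
    (t : Fin n → ℝ)
    (i₀ : Fin N) (h0 : ∀ j, j ≠ i₀ → Q j *ᵥ t = 0) :
    ((Q i₀)ᵀ * Q i₀) *ᵥ t = t ∧
      T *ᵥ t = ((p * N + N - 1) / (p * N * (1 + p))) • t := by
  have hker : ∀ j, j ≠ i₀ → ((Q j)ᵀ * Q j) *ᵥ t = 0 := fun j hj => by
    rw [← mulVec_mulVec, h0 j hj, mulVec_zero]
  have hfix : ((Q i₀)ᵀ * Q i₀) *ᵥ t = t := mulVec_eq_self_of_sum_eq_one hQ hker
  have hres : ∀ i, ((Q i)ᵀ * Q i + p • (1 : Matrix (Fin n) (Fin n) ℝ))⁻¹ *ᵥ t =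
      (if i = i₀ then (1 + p)⁻¹ else p⁻¹) • t := by
    intro i
    have hunit : IsUnit ((Q i)ᵀ * Q i + p • 1) := by
      simpa [conjTranspose_eq_transpose_of_trivial] using
        (posDef_conjTranspose_mul_self_add_smul_one (Q i) hp).isUnit
    split_ifs with hi
    · subst hi
      exact inv_add_smul_one_mulVec_of_mulVec_eq_smul hunit (by positivity) (by rw [hfix, one_smul])
    · simpa using inv_add_smul_one_mulVec_of_mulVec_eq_smul (c := 0) hunit (by simpa using hp.ne')
        (by rw [hker i hi, zero_smul])
  refine ⟨hfix, ?_⟩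
  have hN : (N : ℝ) ≠ 0 := by exact_mod_cast i₀.pos.ne'
  rw [hT, smul_mulVec, sum_mulVec, Finset.sum_congr rfl fun i _ => hres i, ← Finset.sum_smul,
    smul_smul, Fintype.sum_ite_eq_const, Fintype.card_fin]
  congr 1
  field_simp
  ring

theorem stmt9 {N n : ℕ} {m : Fin N → ℕ}
    (Q : ∀ i, Matrix (Fin (m i)) (Fin n) ℝ)
    (hQ : ∑ i, (Q i)ᵀ * Q i = 1)
    (p : ℝ) (hp : 0 < p)
    (T : Matrix (Fin n) (Fin n) ℝ)
    (hT : T = (N : ℝ)⁻¹ •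
      ∑ i, ((Q i)ᵀ * Q i + p • (1 : Matrix (Fin n) (Fin n) ℝ))⁻¹)
    (t : Fin n → ℝ) (ht : ∑ j, t j ^ 2 = 1)
    (i₀ : Fin N) (h0 : ∀ j, j ≠ i₀ → Q j *ᵥ t = 0) :
    ((Q i₀)ᵀ * Q i₀) *ᵥ t = t ∧
      T *ᵥ t = ((p * N + N - 1) / (p * N * (1 + p))) • t :=
  stmt9_general Q hQ p hp T hT t i₀ h0
end

section
/- Let Q₁,…,Q_N satisfy ∑ᵢ QᵢᵀQᵢ = I and π > 0. Suppose t is a unit vector lying in the kernel of exactly P of the Qⱼ and is a right singular vector of each of the remaining N−P matrices Qᵢ with identical singular values. Then tᵀ T_π t = (P(1 − πN) + πN²)/(πN(1 + π(N−P))). -/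
/-!
The vector `t` is a common eigenvector of all the Gram matrices `QᵢᵀQᵢ` (eigenvalue `0` on `J`,
`σ²` off `J`), hence of every `(QᵢᵀQᵢ + π I)⁻¹`, with eigenvalues `π⁻¹` and `(σ² + π)⁻¹`.
Applying `∑ QᵢᵀQᵢ = I` to `t` forces `(N - P) σ² = 1`, and `tᵀ T_π t` is then the average of
these eigenvalues.
-/

open Matrix

namespace Matrix

variable {K n : Type*} [Field K] [Fintype n]

theorem sum_mulVec_eq_smul_of_mulVec_eq_smul {ι : Type*} [Fintype ι] [DecidableEq ι]
    (M : ι → Matrix n n K) (J : Finset ι) {a b : K} {v : n → K}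
    (ha : ∀ i ∈ J, M i *ᵥ v = a • v) (hb : ∀ i ∉ J, M i *ᵥ v = b • v) :
    (∑ i, M i) *ᵥ v = ((J.card : K) * a + (Jᶜ.card : K) * b) • v := by
  rw [sum_mulVec, ← Finset.sum_add_sum_compl J, Finset.sum_congr rfl ha,
    Finset.sum_congr rfl fun i hi => hb i (Finset.mem_compl.mp hi), Finset.sum_const,
    Finset.sum_const, add_smul, mul_smul, mul_smul, Nat.cast_smul_eq_nsmul,
    Nat.cast_smul_eq_nsmul]

variable [DecidableEq n]

theorem inv_mulVec_eq_inv_smul {A : Matrix n n K} (hA : IsUnit A) {c : K} {v : n → K}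
    (hv : A *ᵥ v = c • v) : A⁻¹ *ᵥ v = c⁻¹ • v := by
  have hback : c • (A⁻¹ *ᵥ v) = v := by
    rw [← mulVec_smul, ← hv, mulVec_mulVec, nonsing_inv_mul _ ((isUnit_iff_isUnit_det A).mp hA),
      one_mulVec]
  rcases eq_or_ne c 0 with rfl | hc
  · rw [zero_smul] at hback
    subst hback
    simp
  · rw [← hback, smul_smul, inv_mul_cancel₀ hc, one_smul, hback]

variable {m : Type*} [Fintype m]

theorem posDef_transpose_mul_self_add_smul_one_s10 (Q : Matrix m n ℝ) {p : ℝ} (hp : 0 < p) :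
    (Qᵀ * Q + p • (1 : Matrix n n ℝ)).PosDef := by
  refine PosDef.posSemidef_add ?_ ?_
  · simpa only [conjTranspose_eq_transpose_of_trivial] using posSemidef_conjTranspose_mul_self Q
  · rw [smul_one_eq_diagonal]
    exact PosDef.diagonal fun _ => hp

theorem inv_transpose_mul_self_add_smul_one_mulVec (Q : Matrix m n ℝ) {p σ : ℝ}
    (hp : 0 < p) {t : n → ℝ} (ht : (Qᵀ * Q) *ᵥ t = σ • t) :
    (Qᵀ * Q + p • (1 : Matrix n n ℝ))⁻¹ *ᵥ t = (σ + p)⁻¹ • t :=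
  inv_mulVec_eq_inv_smul (posDef_transpose_mul_self_add_smul_one_s10 Q hp).isUnit <| by
    rw [add_mulVec, ht, smul_mulVec, one_mulVec, add_smul]

end Matrix

theorem stmt10_general {N n : ℕ} {m : Fin N → ℕ}
    (Q : ∀ i, Matrix (Fin (m i)) (Fin n) ℝ)
    (hQ : ∑ i, (Q i)ᵀ * Q i = 1)
    (p : ℝ) (hp : 0 < p)
    (T : Matrix (Fin n) (Fin n) ℝ)
    (hT : T = (N : ℝ)⁻¹ •
      ∑ i, ((Q i)ᵀ * Q i + p • (1 : Matrix (Fin n) (Fin n) ℝ))⁻¹)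
    (t : Fin n → ℝ) (ht : ∑ j, t j ^ 2 = 1)
    (J : Finset (Fin N)) (P : ℕ) (hJ : J.card = P)
    (hker : ∀ j ∈ J, Q j *ᵥ t = 0)
    (σ2 : ℝ) (hσ : ∀ i ∉ J, ((Q i)ᵀ * Q i) *ᵥ t = σ2 • t) :
    t ⬝ᵥ (T *ᵥ t) =
      ((P : ℝ) * (1 - p * N) + p * (N : ℝ) ^ 2) /
        (p * N * (1 + p * ((N : ℝ) - P))) := by
  have htt : t ⬝ᵥ t = 1 := by simpa [dotProduct, sq] using ht
  have ht0 : t ≠ 0 := by rintro rfl; simp at htt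
  have hN : (N : ℝ) = P + Jᶜ.card := by
    rw [← hJ, ← Nat.cast_add, Finset.card_add_card_compl, Fintype.card_fin]
  have hGram : ∀ j ∈ J, ((Q j)ᵀ * Q j) *ᵥ t = (0 : ℝ) • t := fun j hj => by
    rw [← mulVec_mulVec, hker j hj, mulVec_zero, zero_smul]
  have hσ2 : (Jᶜ.card : ℝ) * σ2 = 1 := by
    have h := sum_mulVec_eq_smul_of_mulVec_eq_smul _ J hGram hσ
    rw [hQ, one_mulVec, mul_zero, zero_add] at h
    exact smul_left_injective ℝ ht0 (by simpa only [one_smul] using h.symm)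
  have hInvJ : ∀ j ∈ J, ((Q j)ᵀ * Q j + p • (1 : Matrix (Fin n) (Fin n) ℝ))⁻¹ *ᵥ t = p⁻¹ • t :=
    fun j hj => by simpa only [zero_add] using
      inv_transpose_mul_self_add_smul_one_mulVec _ hp (hGram j hj)
  have hTt : T *ᵥ t = ((N : ℝ)⁻¹ * (P * p⁻¹ + Jᶜ.card * (σ2 + p)⁻¹)) • t := by
    rw [hT, smul_mulVec, sum_mulVec_eq_smul_of_mulVec_eq_smul _ J hInvJ
      (fun i hi => inv_transpose_mul_self_add_smul_one_mulVec _ hp (hσ i hi)), hJ, smul_smul]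
  have hk : (Jᶜ.card : ℝ) ≠ 0 := left_ne_zero_of_mul_eq_one hσ2
  rw [hTt, dotProduct_smul, htt, smul_eq_mul, mul_one, hN, add_sub_cancel_left,
    eq_inv_of_mul_eq_one_right hσ2]
  field_simp
  ring

theorem stmt10 {N n : ℕ} {m : Fin N → ℕ}
    (Q : ∀ i, Matrix (Fin (m i)) (Fin n) ℝ)
    (hQ : ∑ i, (Q i)ᵀ * Q i = 1)
    (p : ℝ) (hp : 0 < p)
    (T : Matrix (Fin n) (Fin n) ℝ)
    (hT : T = (N : ℝ)⁻¹ •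
      ∑ i, ((Q i)ᵀ * Q i + p • (1 : Matrix (Fin n) (Fin n) ℝ))⁻¹)
    (t : Fin n → ℝ) (ht : ∑ j, t j ^ 2 = 1)
    (J : Finset (Fin N)) (P : ℕ) (hJ : J.card = P) (hPN : P < N)
    (hker : ∀ j ∈ J, Q j *ᵥ t = 0)
    (σ2 : ℝ) (hσ : ∀ i ∉ J, ((Q i)ᵀ * Q i) *ᵥ t = σ2 • t) :
    t ⬝ᵥ (T *ᵥ t) =
      ((P : ℝ) * (1 - p * N) + p * (N : ℝ) ^ 2) /
        (p * N * (1 + p * ((N : ℝ) - P))) :=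
  stmt10_general Q hQ p hp T hT t ht J P hJ hker σ2 hσ
end

section
/- Under the HO-GSVD assumptions with π > 0 and N ≥ 2, every eigenvalue ς of S_π satisfies 1 ≤ ς ≤ 1 + 1/(πN(1+π)). -/
/-!
Put `G = AᵀA = ∑ Bᵢ` with `Bᵢ = AᵢᵀAᵢ`, so that `Dᵢ = Bᵢ + πG` and `∑ Dᵢ = (1 + πN) G`.
Expanding the pairs gives `N(N-1) S = (1 + πN) G P - N` with `P = ∑ Dᵢ⁻¹`, so an eigenvalue `ς`
of `S` yields the eigenvalue `μ = (N(N-1)ς + N) / (1 + πN)` of `GP`, and `μ` is trapped between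
the extreme values of the quotient `(Gu)ᵀP(Gu) / uᵀGu`. From below, `P ≥ N² (∑ Dᵢ)⁻¹` is the
matrix harmonic–arithmetic mean inequality. From above, `0 ≤ Bᵢ ≤ G` gives
`Dᵢ⁻¹ ≤ G⁻¹ / π - G⁻¹BᵢG⁻¹ / (π(1+π))`, and summing over `i` uses `∑ Bᵢ = G` once more.
-/

open Matrix Finset

theorem Finset.sum_sum_Ioi_add_swap {α M : Type*} [AddCommMonoid M] [LinearOrder α] [Fintype α]
    [LocallyFiniteOrderTop α] [LocallyFiniteOrderBot α] (f : α → α → M) :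
    ∑ i, ∑ j ∈ Ioi i, (f i j + f j i) = ∑ i, ∑ j ∈ {i}ᶜ, f j i := by
  have hswap : ∑ i, ∑ j ∈ Ioi i, f i j = ∑ i, ∑ j ∈ Iio i, f j i := sum_comm' (by simp)
  simp_rw [sum_add_distrib, hswap, ← sum_add_distrib, ← Ioi_disjUnion_Iio, sum_disjUnion,
    add_comm]

theorem Finset.sum_add_smul_of_sum_eq {α M : Type*} [Fintype α] [AddCommMonoid M] [Module ℝ M]
    {B : α → M} {G : M} (hBG : ∑ i, B i = G) (p : ℝ) :
    ∑ i, (B i + p • G) = (1 + p * Fintype.card α) • G := by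
  rw [sum_add_distrib, hBG, sum_const, card_univ, ← Nat.cast_smul_eq_nsmul ℝ, smul_smul,
    add_smul, one_smul, mul_comm]

namespace Matrix

theorem IsSymm.dotProduct_mulVec_comm {ι R : Type*} [Fintype ι] [CommSemiring R]
    {M : Matrix ι ι R} (hM : M.IsSymm) (x y : ι → R) : x ⬝ᵥ (M *ᵥ y) = y ⬝ᵥ (M *ᵥ x) := by
  rw [dotProduct_mulVec, ← hM.eq, vecMul_transpose, dotProduct_comm, hM.eq]

theorem injective_mulVec_of_rank_eq_card {m n K : Type*} [Fintype m] [Fintype n] [Field K]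
    {A : Matrix m n K} (hA : A.rank = Fintype.card n) : Function.Injective A.mulVec :=
  mulVec_injective_iff.mpr <| linearIndependent_iff_card_eq_finrank_span.mpr <|
    by rw [← hA, rank_eq_finrank_span_cols]; rfl

theorem sum_transpose_mul_self_eq {κ n R : Type*} [Fintype κ] [Fintype n] [CommSemiring R]
    {m : κ → Type*} [∀ i, Fintype (m i)] (A : ∀ i, Matrix (m i) n R)
    (Astack : Matrix ((i : κ) × m i) n R) (hstack : ∀ i j, Astack ⟨i, j⟩ = A i j) :
    ∑ i, (A i)ᵀ * A i = Astackᵀ * Astack := by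
  ext k l
  simp [mul_apply, sum_apply, Fintype.sum_sigma, hstack]

section Inverse

variable {ι R : Type*} [Fintype ι] [DecidableEq ι] [CommRing R]

theorem mulVec_nonsing_inv_mulVec {M : Matrix ι ι R} (hM : IsUnit M.det) (x : ι → R) :
    M *ᵥ (M⁻¹ *ᵥ x) = x := by
  rw [mulVec_mulVec, mul_nonsing_inv _ hM, one_mulVec]

theorem nonsing_inv_mulVec_mulVec {M : Matrix ι ι R} (hM : IsUnit M.det) (x : ι → R) :
    M⁻¹ *ᵥ (M *ᵥ x) = x := by
  rw [mulVec_mulVec, nonsing_inv_mul _ hM, one_mulVec]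

theorem sum_sum_Ioi_mul_nonsing_inv_add {α : Type*} [LinearOrder α] [Fintype α]
    [LocallyFiniteOrderTop α] [LocallyFiniteOrderBot α] {D : α → Matrix ι ι R}
    (hD : ∀ i, IsUnit (D i).det) :
    ∑ i, ∑ j ∈ Ioi i, (D i * (D j)⁻¹ + D j * (D i)⁻¹)
      = (∑ i, D i) * ∑ i, (D i)⁻¹ - (Fintype.card α : R) • 1 := by
  have hcompl : ∀ i, ∑ j ∈ {i}ᶜ, D j * (D i)⁻¹ = (∑ j, D j) * (D i)⁻¹ - 1 := fun i ↦ by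
    rw [Fintype.sum_eq_add_sum_compl i D, add_mul, mul_nonsing_inv _ (hD i), sum_mul,
      add_sub_cancel_left]
  rw [sum_sum_Ioi_add_swap (fun i j ↦ D i * (D j)⁻¹)]
  simp_rw [hcompl, sum_sub_distrib, ← mul_sum, sum_const, card_univ, Nat.cast_smul_eq_nsmul]

end Inverse

section QuadraticForm

theorem PosSemidef.isSymm {ι : Type*} {F : Matrix ι ι ℝ} (hF : F.PosSemidef) : F.IsSymm :=
  isHermitian_iff_isSymm.mp hF.isHermitian

variable {ι : Type*} [Fintype ι]

theorem PosSemidef.dotProduct_mulVec_self_nonneg {F : Matrix ι ι ℝ} (hF : F.PosSemidef)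
    (x : ι → ℝ) : 0 ≤ x ⬝ᵥ (F *ᵥ x) := by
  simpa using hF.dotProduct_mulVec_nonneg x

variable [DecidableEq ι] {D F B G : Matrix ι ι ℝ}

theorem PosDef.isUnit_det (hD : D.PosDef) : IsUnit D.det :=
  (isUnit_iff_isUnit_det D).mp hD.isUnit

theorem PosDef.two_mul_dotProduct_sub_le (hD : D.PosDef) (v w : ι → ℝ) :
    2 * (v ⬝ᵥ w) - w ⬝ᵥ (D *ᵥ w) ≤ v ⬝ᵥ (D⁻¹ *ᵥ v) := by
  have hsq := hD.posSemidef.dotProduct_mulVec_self_nonneg (w - D⁻¹ *ᵥ v)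
  rw [mulVec_sub, mulVec_nonsing_inv_mulVec hD.isUnit_det, dotProduct_sub, sub_dotProduct,
    sub_dotProduct, hD.posSemidef.isSymm.dotProduct_mulVec_comm (D⁻¹ *ᵥ v),
    mulVec_nonsing_inv_mulVec hD.isUnit_det, dotProduct_comm (D⁻¹ *ᵥ v), dotProduct_comm w,
    dotProduct_comm (D *ᵥ w)] at hsq
  linarith [dotProduct_comm v w]

theorem PosDef.dotProduct_inv_mulVec_le (hD : D.PosDef) (hF : F.PosSemidef)
    (hDF : (D - F).PosSemidef) (x : ι → ℝ) :
    (F *ᵥ x) ⬝ᵥ (D⁻¹ *ᵥ (F *ᵥ x)) ≤ x ⬝ᵥ (F *ᵥ x) := by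
  set z := D⁻¹ *ᵥ (F *ᵥ x)
  have hDz : D *ᵥ z = F *ᵥ x := mulVec_nonsing_inv_mulVec hD.isUnit_det _
  have h₁ := hF.dotProduct_mulVec_self_nonneg (x - z)
  have h₂ := hDF.dotProduct_mulVec_self_nonneg z
  rw [mulVec_sub, dotProduct_sub, sub_dotProduct, sub_dotProduct,
    hF.isSymm.dotProduct_mulVec_comm z x] at h₁
  rw [sub_mulVec, dotProduct_sub, hDz, hF.isSymm.dotProduct_mulVec_comm z x] at h₂
  linarith [dotProduct_comm (F *ᵥ x) z, hF.isSymm.dotProduct_mulVec_comm z x]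

/-- In coordinates where `G = 1` and `B` is diagonal with entries `β ∈ [0, 1]`, this is the scalar
inequality `1 / (β + p) ≤ (1 + p - β) / (p (1 + p))`. -/
theorem dotProduct_add_smul_inv_mulVec_le (hG : G.PosDef) (hB : B.PosSemidef)
    (hBG : (G - B).PosSemidef) {p : ℝ} (hp : 0 < p) (u : ι → ℝ) :
    p * (1 + p) * ((G *ᵥ u) ⬝ᵥ ((B + p • G)⁻¹ *ᵥ (G *ᵥ u)))
      ≤ (1 + p) * (u ⬝ᵥ (G *ᵥ u)) - u ⬝ᵥ (B *ᵥ u) := by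
  set D := B + p • G
  have hD : D.PosDef := PosDef.posSemidef_add hB (hG.smul hp)
  have hDsymm : D⁻¹.IsSymm := hD.posSemidef.isSymm.inv
  set b := u ⬝ᵥ (B *ᵥ u)
  set e := (B *ᵥ u) ⬝ᵥ (D⁻¹ *ᵥ (B *ᵥ u))
  have hpGu : p • (G *ᵥ u) = D *ᵥ u - B *ᵥ u := by simp [D, add_mulVec, smul_mulVec]
  have hexpand :
      p ^ 2 * ((G *ᵥ u) ⬝ᵥ (D⁻¹ *ᵥ (G *ᵥ u))) = p * (u ⬝ᵥ (G *ᵥ u)) - b + e := by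
    have hsq : (p • (G *ᵥ u)) ⬝ᵥ (D⁻¹ *ᵥ (p • (G *ᵥ u)))
        = p ^ 2 * ((G *ᵥ u) ⬝ᵥ (D⁻¹ *ᵥ (G *ᵥ u))) := by
      simp only [mulVec_smul, dotProduct_smul, smul_dotProduct, smul_eq_mul]; ring
    rw [← hsq, hpGu, mulVec_sub, nonsing_inv_mulVec_mulVec hD.isUnit_det, dotProduct_sub,
      sub_dotProduct, sub_dotProduct, hDsymm.dotProduct_mulVec_comm (D *ᵥ u),
      nonsing_inv_mulVec_mulVec hD.isUnit_det, dotProduct_comm (D *ᵥ u),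
      dotProduct_comm (B *ᵥ u)]
    simp only [D, add_mulVec, smul_mulVec, dotProduct_add, dotProduct_smul, smul_eq_mul]
    ring
  have hsandwich : (1 + p) * e ≤ b := by
    have hDF : (D - (1 + p) • B).PosSemidef := by
      rw [show D - (1 + p) • B = p • (G - B) by module]
      exact hBG.smul hp.le
    have h := hD.dotProduct_inv_mulVec_le (hB.smul (by positivity)) hDF u
    simp only [smul_mulVec, mulVec_smul, dotProduct_smul, smul_dotProduct, smul_eq_mul] at h
    nlinarith
  nlinarith

/-- The matrix harmonic–arithmetic mean inequality `∑ Dⱼ⁻¹ ≥ |s|² (∑ Dⱼ)⁻¹`, tested on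
`(∑ Dⱼ) u` so that no inverse of the sum appears. -/
theorem sq_card_mul_dotProduct_sum_mulVec_le {κ : Type*} (s : Finset κ)
    {D : κ → Matrix ι ι ℝ} (hD : ∀ j ∈ s, (D j).PosDef) (u : ι → ℝ) :
    (#s : ℝ) ^ 2 * (u ⬝ᵥ ((∑ j ∈ s, D j) *ᵥ u))
      ≤ ((∑ j ∈ s, D j) *ᵥ u) ⬝ᵥ ((∑ j ∈ s, (D j)⁻¹) *ᵥ ((∑ j ∈ s, D j) *ᵥ u)) := by
  set v := (∑ j ∈ s, D j) *ᵥ u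
  calc (#s : ℝ) ^ 2 * (u ⬝ᵥ v)
      = ∑ j ∈ s, (2 * (v ⬝ᵥ ((#s : ℝ) • u)) - ((#s : ℝ) • u) ⬝ᵥ (D j *ᵥ ((#s : ℝ) • u))) := by
        simp only [v, sum_sub_distrib, sum_const, nsmul_eq_mul, mulVec_smul, dotProduct_smul,
          smul_dotProduct, smul_eq_mul, ← mul_sum, ← dotProduct_sum, ← sum_mulVec,
          dotProduct_comm _ u]
        ring
    _ ≤ ∑ j ∈ s, v ⬝ᵥ ((D j)⁻¹ *ᵥ v) :=
        sum_le_sum fun j hj ↦ (hD j hj).two_mul_dotProduct_sub_le v _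
    _ = v ⬝ᵥ ((∑ j ∈ s, (D j)⁻¹) *ᵥ v) := by rw [sum_mulVec, dotProduct_sum]

theorem PosDef.mem_Icc_of_mulVec_mulVec_eq_smul {P : Matrix ι ι ℝ} (hG : G.PosDef)
    {a b μ : ℝ} (hlow : ∀ u, a * (u ⬝ᵥ (G *ᵥ u)) ≤ (G *ᵥ u) ⬝ᵥ (P *ᵥ (G *ᵥ u)))
    (hup : ∀ u, (G *ᵥ u) ⬝ᵥ (P *ᵥ (G *ᵥ u)) ≤ b * (u ⬝ᵥ (G *ᵥ u)))
    {v : ι → ℝ} (hv : v ≠ 0) (hGPv : G *ᵥ (P *ᵥ v) = μ • v) : μ ∈ Set.Icc a b := by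
  set u := G⁻¹ *ᵥ v
  have hGu : G *ᵥ u = v := mulVec_nonsing_inv_mulVec hG.isUnit_det v
  have hu : u ≠ 0 := by rintro hu; simp [← hGu, hu] at hv
  have hq : 0 < u ⬝ᵥ (G *ᵥ u) := by simpa using hG.dotProduct_mulVec_pos hu
  have hPv : P *ᵥ v = μ • u := by
    rw [← nonsing_inv_mulVec_mulVec hG.isUnit_det (P *ᵥ v), hGPv, mulVec_smul]
  have hquot : (G *ᵥ u) ⬝ᵥ (P *ᵥ (G *ᵥ u)) = μ * (u ⬝ᵥ (G *ᵥ u)) := by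
    rw [hGu, hPv, dotProduct_smul, smul_eq_mul, dotProduct_comm, ← hGu]
  exact ⟨le_of_mul_le_mul_right (hquot ▸ hlow u) hq, le_of_mul_le_mul_right (hquot ▸ hup u) hq⟩

section Blocks

variable {α : Type*} [Fintype α] {B : α → Matrix ι ι ℝ}

theorem sq_card_div_mul_le_dotProduct_sum_inv_mulVec (hG : G.PosDef)
    (hB : ∀ i, (B i).PosSemidef) (hBG : ∑ i, B i = G) {p : ℝ} (hp : 0 < p) (u : ι → ℝ) :
    (Fintype.card α : ℝ) ^ 2 / (1 + p * Fintype.card α) * (u ⬝ᵥ (G *ᵥ u))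
      ≤ (G *ᵥ u) ⬝ᵥ ((∑ i, (B i + p • G)⁻¹) *ᵥ (G *ᵥ u)) := by
  set κ := 1 + p * Fintype.card α
  have hκ : 0 < κ := by positivity
  have h := sq_card_mul_dotProduct_sum_mulVec_le univ
    (fun i _ ↦ PosDef.posSemidef_add (hB i) (hG.smul hp)) u
  simp only [sum_add_smul_of_sum_eq hBG, card_univ, smul_mulVec, mulVec_smul, dotProduct_smul,
    smul_dotProduct, smul_eq_mul] at h
  rw [div_mul_eq_mul_div, div_le_iff₀ hκ]
  nlinarith

theorem dotProduct_sum_inv_mulVec_le (hG : G.PosDef) (hB : ∀ i, (B i).PosSemidef)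
    (hBG : ∑ i, B i = G) {p : ℝ} (hp : 0 < p) (u : ι → ℝ) :
    (G *ᵥ u) ⬝ᵥ ((∑ i, (B i + p • G)⁻¹) *ᵥ (G *ᵥ u))
      ≤ (Fintype.card α * (1 + p) - 1) / (p * (1 + p)) * (u ⬝ᵥ (G *ᵥ u)) := by
  classical
  have hcompl : ∀ i, (G - B i).PosSemidef := fun i ↦ by
    rw [← hBG, Fintype.sum_eq_add_sum_compl i, add_sub_cancel_left]
    exact posSemidef_sum _ fun j _ ↦ hB j
  have h := sum_le_sum fun i (_ : i ∈ univ) ↦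
    dotProduct_add_smul_inv_mulVec_le hG (hB i) (hcompl i) hp u
  rw [← mul_sum, ← dotProduct_sum, ← sum_mulVec, sum_sub_distrib, ← dotProduct_sum,
    ← sum_mulVec, hBG, sum_const, card_univ, nsmul_eq_mul] at h
  rw [div_mul_eq_mul_div, le_div_iff₀ (by positivity)]
  linarith

end Blocks

end QuadraticForm

theorem mulVec_eq_smul_of_inv_smul_sub_smul_one {ι K : Type*} [Fintype ι] [DecidableEq ι]
    [Field K] {X : Matrix ι ι K} {v : ι → K} {c κ d ς : K} (hc : c ≠ 0) (hκ : κ ≠ 0)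
    (h : (c⁻¹ • (κ • X - d • 1)) *ᵥ v = ς • v) : X *ᵥ v = ((c * ς + d) / κ) • v := by
  ext k
  have hk := congrFun h k
  simp only [smul_mulVec, sub_mulVec, one_mulVec, Pi.smul_apply, Pi.sub_apply,
    smul_eq_mul] at hk ⊢
  field_simp at hk ⊢
  linear_combination hk

end Matrix

theorem one_le_and_le_of_mem_Icc {N p ς : ℝ} (hN : 2 ≤ N) (hp : 0 < p)
    (h : (N * (N - 1) * ς + N) / (1 + p * N) ∈
      Set.Icc (N ^ 2 / (1 + p * N)) ((N * (1 + p) - 1) / (p * (1 + p)))) :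
    1 ≤ ς ∧ ς ≤ 1 + 1 / (p * N * (1 + p)) := by
  obtain ⟨hlow, hup⟩ := h
  rw [div_le_div_iff_of_pos_right (by positivity)] at hlow
  rw [div_le_div_iff₀ (by positivity) (by positivity)] at hup
  have hc : 0 < N * (N - 1) := by nlinarith
  refine ⟨le_of_mul_le_mul_left (by linarith) hc, le_of_mul_le_mul_left ?_ hc⟩
  rw [show N * (N - 1) * (1 + 1 / (p * N * (1 + p))) = N * (N - 1) + (N - 1) / (p * (1 + p)) by
      field_simp,
    ← sub_le_iff_le_add', le_div_iff₀ (by positivity)]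
  nlinarith

theorem stmt12 {N n : ℕ} (hN : 2 ≤ N) {m : Fin N → ℕ}
    (A : ∀ i, Matrix (Fin (m i)) (Fin n) ℝ)
    (Astack : Matrix ((i : Fin N) × Fin (m i)) (Fin n) ℝ)
    (hstack : ∀ i j, Astack ⟨i, j⟩ = A i j)
    (hrank : Astack.rank = n)
    (p : ℝ) (hp : 0 < p)
    (D : Fin N → Matrix (Fin n) (Fin n) ℝ)
    (hD : ∀ i, D i = (A i)ᵀ * A i + p • (Astackᵀ * Astack))
    (S : Matrix (Fin n) (Fin n) ℝ)
    (hS : S = ((N : ℝ) * ((N : ℝ) - 1))⁻¹ •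
      ∑ i, ∑ j ∈ Finset.Ioi i, (D i * (D j)⁻¹ + D j * (D i)⁻¹)) :
    ∀ (ς : ℝ) (v : Fin n → ℝ), v ≠ 0 → S *ᵥ v = ς • v →
      1 ≤ ς ∧ ς ≤ 1 + 1 / (p * N * (1 + p)) := by
  intro ς v hv hSv
  set G := Astackᵀ * Astack
  have hG : G.PosDef := by
    simpa using PosDef.conjTranspose_mul_self Astack
      (injective_mulVec_of_rank_eq_card (by simpa using hrank))
  have hB : ∀ i, ((A i)ᵀ * A i).PosSemidef := fun i ↦ by
    simpa using posSemidef_conjTranspose_mul_self (A i)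
  have hBG : ∑ i, (A i)ᵀ * A i = G := sum_transpose_mul_self_eq A Astack hstack
  obtain rfl : D = fun i ↦ (A i)ᵀ * A i + p • G := funext hD
  have hN' : (2 : ℝ) ≤ N := by exact_mod_cast hN
  rw [hS, sum_sum_Ioi_mul_nonsing_inv_add
      fun i ↦ (PosDef.posSemidef_add (hB i) (hG.smul hp)).isUnit_det,
    sum_add_smul_of_sum_eq hBG, Fintype.card_fin, smul_mul] at hSv
  have hGPv := mulVec_eq_smul_of_inv_smul_sub_smul_one
    (by nlinarith : (0 : ℝ) < N * (N - 1)).ne' (by positivity) hSv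
  rw [← mulVec_mulVec] at hGPv
  refine one_le_and_le_of_mem_Icc hN' hp ?_
  simpa using hG.mem_Icc_of_mulVec_mulVec_eq_smul
    (sq_card_div_mul_le_dotProduct_sum_inv_mulVec hG hB hBG hp)
    (dotProduct_sum_inv_mulVec_le hG hB hBG hp) hv hGPv
end

section
/- Let R_{i,π} := QᵢᵀQᵢ + πI for i = 1,…,N with π > 0, and define g_π(z) = (1/(N(N−1))) ∑_{i<j} (zᵀR_{i,π}z / zᵀR_{j,π}z + zᵀR_{j,π}z / zᵀR_{i,π}z) for z ≠ 0. If z is a common eigenvector of all QᵢᵀQᵢ (i.e., R_{i,π}z = (σᵢ² + π)z for each i), then the gradient of g_π vanishes at z: ∇g_π(z) = 0. -/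
/-!
At a common eigenvector `z` of symmetric matrices `A` and `B`, the gradients `2 a z` and `2 b z`
of the quadratic forms `wᵀAw` and `wᵀBw` are proportional, in the same ratio as their values
`a ‖z‖²` and `b ‖z‖²`; hence the quotient `wᵀAw / wᵀBw` is stationary at `z`. Each `R_{i,π}` is
positive definite with eigenvector `z`, so every summand of `g_π` is stationary at `z`.
-/

open Matrix BigOperators Finset

variable {𝕜 : Type*} [NontriviallyNormedField 𝕜]

theorem hasFDerivAt_div_eq_zero_of_proportional {E : Type*} [NormedAddCommGroup E]
    [NormedSpace 𝕜 E] {f g : E → 𝕜} {D : E →L[𝕜] 𝕜} {a b : 𝕜} {z : E}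
    (hf : HasFDerivAt f (a • D) z) (hg : HasFDerivAt g (b • D) z)
    (hfg : f z * b = g z * a) (hgz : g z ≠ 0) :
    HasFDerivAt (fun w => f w / g w) (0 : E →L[𝕜] 𝕜) z := by
  have hquot := hf.mul ((hasFDerivAt_inv (𝕜 := 𝕜) hgz).comp z hg)
  simp only [div_eq_mul_inv]
  refine hquot.congr_fderiv ?_
  ext h
  simp only [ContinuousLinearMap.comp_smulₛₗ, RingHom.id_apply, Function.comp_apply,
    _root_.add_apply, _root_.smul_apply, ContinuousLinearMap.comp_apply,
    ContinuousLinearMap.toSpanSingleton_apply, smul_eq_mul, mul_neg, _root_.zero_apply]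
  field_simp
  linear_combination -D h * hfg

section QuadraticForm

variable [CompleteSpace 𝕜] {ι : Type*} [Fintype ι]

theorem hasFDerivAt_dotProduct_mulVec_self (M : Matrix ι ι 𝕜) (z : ι → 𝕜) :
    HasFDerivAt (fun w => w ⬝ᵥ (M *ᵥ w))
      (LinearMap.toContinuousLinearMap (dotProductBilin 𝕜 𝕜 (z ᵥ* (M + Mᵀ)))) z := by
  have hprod := (dotProductBilin 𝕜 𝕜).toContinuousBilinearMap.hasFDerivAt_of_bilinear
    (hasFDerivAt_id z) (LinearMap.toContinuousLinearMap M.mulVecLin).hasFDerivAt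
  refine hprod.congr_fderiv ?_
  ext h
  simp only [id_eq, ContinuousLinearMap.precompR_apply, ContinuousLinearMap.compL_apply,
    LinearMap.coe_toContinuousLinearMap', mulVecBilin_apply, _root_.add_apply,
    ContinuousLinearMap.comp_apply, LinearMap.toContinuousBilinearMap_apply,
    dotProductBilin_apply_apply, ContinuousLinearMap.precompL_apply, ContinuousLinearMap.id_apply]
  rw [vecMul_add, add_dotProduct, dotProduct_mulVec, vecMul_transpose, dotProduct_comm h]

theorem hasFDerivAt_dotProduct_mulVec_self_of_eigenvector {M : Matrix ι ι 𝕜} {z : ι → 𝕜} {a : 𝕜}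
    (hM : M.IsSymm) (hz : M *ᵥ z = a • z) :
    HasFDerivAt (fun w => w ⬝ᵥ (M *ᵥ w))
      ((2 * a) • LinearMap.toContinuousLinearMap (dotProductBilin 𝕜 𝕜 z)) z := by
  refine (hasFDerivAt_dotProduct_mulVec_self M z).congr_fderiv ?_
  have hzM : z ᵥ* M = a • z := by rw [← mulVec_transpose, hM.eq, hz]
  ext h
  simp [vecMul_add, hM.eq, hzM, two_mul, add_mul]

theorem hasFDerivAt_div_dotProduct_mulVec_of_eigenvector {A B : Matrix ι ι 𝕜} {z : ι → 𝕜}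
    {a b : 𝕜} (hA : A.IsSymm) (hB : B.IsSymm) (hAz : A *ᵥ z = a • z) (hBz : B *ᵥ z = b • z)
    (hzBz : z ⬝ᵥ (B *ᵥ z) ≠ 0) :
    HasFDerivAt (fun w => (w ⬝ᵥ (A *ᵥ w)) / (w ⬝ᵥ (B *ᵥ w))) (0 : (ι → 𝕜) →L[𝕜] 𝕜) z :=
  hasFDerivAt_div_eq_zero_of_proportional
    (hasFDerivAt_dotProduct_mulVec_self_of_eigenvector hA hAz)
    (hasFDerivAt_dotProduct_mulVec_self_of_eigenvector hB hBz)
    (by rw [hAz, hBz, dotProduct_smul, dotProduct_smul, smul_eq_mul, smul_eq_mul]; ring) hzBz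

end QuadraticForm

theorem stmt19 {N n : ℕ} {m : Fin N → ℕ}
    (Q : ∀ i, Matrix (Fin (m i)) (Fin n) ℝ)
    (p : ℝ) (hp : 0 < p)
    (R : Fin N → Matrix (Fin n) (Fin n) ℝ)
    (hRdef : ∀ i, R i = (Q i)ᵀ * Q i + p • (1 : Matrix (Fin n) (Fin n) ℝ))
    (g : (Fin n → ℝ) → ℝ)
    (hg : g = fun z => ((N : ℝ) * ((N : ℝ) - 1))⁻¹ *
      ∑ i, ∑ j ∈ Finset.Ioi i,
        ((z ⬝ᵥ ((R i) *ᵥ z)) / (z ⬝ᵥ ((R j) *ᵥ z)) +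
          (z ⬝ᵥ ((R j) *ᵥ z)) / (z ⬝ᵥ ((R i) *ᵥ z))))
    (z : Fin n → ℝ) (hz : z ≠ 0)
    (σ2 : Fin N → ℝ)
    (hev : ∀ i, ((Q i)ᵀ * Q i) *ᵥ z = σ2 i • z) :
    fderiv ℝ g z = 0 := by
  have hR_posDef : ∀ i, (R i).PosDef := fun i => by
    rw [hRdef i, ← conjTranspose_eq_transpose_of_trivial]
    exact PosDef.posSemidef_add (posSemidef_conjTranspose_mul_self (Q i)) (PosDef.one.smul hp)
  have hR_symm : ∀ i, (R i).IsSymm := fun i => isHermitian_iff_isSymm.mp (hR_posDef i).isHermitian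
  have hRz : ∀ i, R i *ᵥ z = (σ2 i + p) • z := fun i => by
    rw [hRdef i, add_mulVec, hev i, smul_mulVec, one_mulVec, add_smul]
  have hzRz : ∀ i, z ⬝ᵥ (R i *ᵥ z) ≠ 0 := fun i => by
    simpa using ((hR_posDef i).dotProduct_mulVec_pos hz).ne'
  have hquot : ∀ i j, HasFDerivAt (fun w => (w ⬝ᵥ (R i *ᵥ w)) / (w ⬝ᵥ (R j *ᵥ w))) 0 z :=
    fun i j => hasFDerivAt_div_dotProduct_mulVec_of_eigenvector (hR_symm i) (hR_symm j)
      (hRz i) (hRz j) (hzRz j)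
  have hsum := HasFDerivAt.fun_sum fun i (_ : i ∈ Finset.univ) =>
    HasFDerivAt.fun_sum fun j (_ : j ∈ Finset.Ioi i) => (hquot i j).fun_add (hquot j i)
  subst hg
  simpa using (hsum.const_mul ((N : ℝ) * ((N : ℝ) - 1))⁻¹).fderiv
end
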